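/- arXiv:2604.26134 — 2 statements merged into one kernel-verified Lean document; each statement's English description precedes it below -/
import Mathlib

section
/- For every vector c ∈ ℝ^n and every admissible control u, one has cᵀ x(T; u) ≤ cᵀ x(T; u*(·; c)); consequently, cᵀ x(T; u*(·; c)) = sup { cᵀ q : q ∈ R(T) }, i.e., the endpoint of the bang-bang control u*(·; c) maximizes the linear functional q ↦ cᵀ q over the reachable set. -/
/-!
Transposing the matrix exponential turns `c ⬝ᵥ x(T; u)` into `∫ ψ(t; c) ⬝ᵥ u(t) dt`. For each `t`
the bang-bang value maximizes the integrand over the box `[u̲, ū]`: the term `ψ_i u_i` is largest at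
`ū_i` when `ψ_i ≥ 0` and at `u̲_i` otherwise. Since `ψ` is continuous, `u*` is measurable, hence
admissible, so its endpoint is the greatest element of `{c ⬝ᵥ q | q ∈ R(T)}`.
-/

open MeasureTheory Matrix

/-- Matrix exponential. -/
noncomputable def mexp {n : ℕ} (M : Matrix (Fin n) (Fin n) ℝ) : Matrix (Fin n) (Fin n) ℝ :=
  NormedSpace.exp M

/-- State reached from the origin at time `T`: `x(T;u) = ∫_{t₀}^{T} e^{A(T−t)} B u(t) dt`. -/
noncomputable def endpoint {n m : ℕ} (A : Matrix (Fin n) (Fin n) ℝ)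
    (B : Matrix (Fin n) (Fin m) ℝ) (t₀ T : ℝ) (u : ℝ → Fin m → ℝ) : Fin n → ℝ :=
  ∫ t in t₀..T, (mexp ((T - t) • A)).mulVec (B.mulVec (u t))

/-- Admissible control: measurable with componentwise bounds `u̲ ≤ u(t) ≤ ū` on `[t₀,T]`. -/
def Admissible {m : ℕ} (t₀ T : ℝ) (ulo uhi : Fin m → ℝ) (u : ℝ → Fin m → ℝ) : Prop :=
  Measurable u ∧ ∀ t ∈ Set.Icc t₀ T, ∀ i, ulo i ≤ u t i ∧ u t i ≤ uhi i

/-- Reachable set at time `T` from the origin. -/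
def ReachSet {n m : ℕ} (A : Matrix (Fin n) (Fin n) ℝ) (B : Matrix (Fin n) (Fin m) ℝ)
    (t₀ T : ℝ) (ulo uhi : Fin m → ℝ) : Set (Fin n → ℝ) :=
  {x | ∃ u, Admissible t₀ T ulo uhi u ∧ x = endpoint A B t₀ T u}

/-- `ψ(t;c) = Bᵀ e^{Aᵀ(T−t)} c`. -/
noncomputable def psi {n m : ℕ} (A : Matrix (Fin n) (Fin n) ℝ)
    (B : Matrix (Fin n) (Fin m) ℝ) (T : ℝ) (c : Fin n → ℝ) (t : ℝ) : Fin m → ℝ :=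
  Bᵀ.mulVec ((mexp ((T - t) • Aᵀ)).mulVec c)

/-- Bang-bang control: `u*_i(t) = ū_i` if `ψ_i(t;c) ≥ 0`, else `u̲_i`. -/
noncomputable def bang {n m : ℕ} (A : Matrix (Fin n) (Fin n) ℝ)
    (B : Matrix (Fin n) (Fin m) ℝ) (T : ℝ) (ulo uhi : Fin m → ℝ)
    (c : Fin n → ℝ) (t : ℝ) (i : Fin m) : ℝ :=
  if 0 ≤ psi A B T c t i then uhi i else ulo i

theorem continuous_mexp_sub_smul {n : ℕ} (A : Matrix (Fin n) (Fin n) ℝ) (T : ℝ) :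
    Continuous fun t : ℝ => mexp ((T - t) • A) := by
  -- `mexp` is defined without reference to a norm, so any normed algebra structure will do.
  let : NormedRing (Matrix (Fin n) (Fin n) ℝ) := Matrix.linftyOpNormedRing
  let : NormedAlgebra ℝ (Matrix (Fin n) (Fin n) ℝ) := Matrix.linftyOpNormedAlgebra
  let : NormedAlgebra ℚ (Matrix (Fin n) (Fin n) ℝ) := .restrictScalars ℚ ℝ _
  exact NormedSpace.exp_continuous.comp ((continuous_const.sub continuous_id).smul continuous_const)

theorem mexp_transpose {n : ℕ} (M : Matrix (Fin n) (Fin n) ℝ) : mexp Mᵀ = (mexp M)ᵀ :=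
  exp_transpose M

theorem dotProduct_le_dotProduct_ite {ι : Type*} [Fintype ι] {p lo v hi : ι → ℝ}
    (hlo : lo ≤ v) (hhi : v ≤ hi) :
    p ⬝ᵥ v ≤ p ⬝ᵥ fun i => if 0 ≤ p i then hi i else lo i := by
  refine Finset.sum_le_sum fun i _ => ?_
  dsimp only
  split_ifs with hp
  · exact mul_le_mul_of_nonneg_left (hhi i) hp
  · exact mul_le_mul_of_nonpos_left (hlo i) (not_le.mp hp).le

theorem intervalIntegrable_pi_iff {ι : Type*} [Fintype ι] {f : ℝ → ι → ℝ} {a b : ℝ} :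
    IntervalIntegrable f volume a b ↔ ∀ i, IntervalIntegrable (f · i) volume a b := by
  simp only [intervalIntegrable_iff, IntegrableOn, integrable_pi_iff]

theorem dotProduct_intervalIntegral {ι : Type*} [Fintype ι] (c : ι → ℝ) {f : ℝ → ι → ℝ}
    {a b : ℝ} (hf : IntervalIntegrable f volume a b) :
    c ⬝ᵥ ∫ t in a..b, f t = ∫ t in a..b, c ⬝ᵥ f t :=
  ((dotProductBilin ℝ ℝ c).toContinuousLinearMap.intervalIntegral_comp_comm hf).symm

section Control

variable {n m : ℕ} (A : Matrix (Fin n) (Fin n) ℝ) (B : Matrix (Fin n) (Fin m) ℝ) (T : ℝ)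
  (c : Fin n → ℝ)

theorem dotProduct_mexp_mulVec (t : ℝ) (v : Fin m → ℝ) :
    c ⬝ᵥ mexp ((T - t) • A) *ᵥ B *ᵥ v = psi A B T c t ⬝ᵥ v := by
  rw [psi, ← transpose_smul, mexp_transpose, dotProduct_mulVec, dotProduct_mulVec,
    mulVec_transpose, mulVec_transpose, vecMul_vecMul]

theorem continuous_psi : Continuous (psi A B T c) :=
  continuous_const.matrix_mulVec
    ((continuous_mexp_sub_smul Aᵀ T).matrix_mulVec continuous_const)

theorem admissible_bang {t₀ : ℝ} {ulo uhi : Fin m → ℝ} (hbnd : ulo ≤ uhi) :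
    Admissible t₀ T ulo uhi (bang A B T ulo uhi c) := by
  refine ⟨measurable_pi_lambda _ fun i => Measurable.ite ?_ measurable_const measurable_const,
    fun t _ i => ?_⟩
  · exact measurableSet_le measurable_const
      ((continuous_apply i).comp (continuous_psi A B T c)).measurable
  · unfold bang
    split_ifs
    exacts [⟨hbnd i, le_rfl⟩, ⟨le_rfl, hbnd i⟩]

end Control

namespace Admissible

variable {m : ℕ} {t₀ T : ℝ} {ulo uhi : Fin m → ℝ} {u : ℝ → Fin m → ℝ}

theorem intervalIntegrable_apply (hu : Admissible t₀ T ulo uhi u) (hT : t₀ ≤ T) (j : Fin m) :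
    IntervalIntegrable (u · j) volume t₀ T := by
  rw [intervalIntegrable_iff_integrableOn_Ioc_of_le hT]
  refine Measure.integrableOn_of_bounded (M := |ulo j| + |uhi j|) measure_Ioc_lt_top.ne
    ((measurable_pi_apply j).comp hu.1).aestronglyMeasurable ?_
  filter_upwards [ae_restrict_mem measurableSet_Ioc] with t ht
  obtain ⟨hlo, hhi⟩ := hu.2 t (Set.Ioc_subset_Icc_self ht) j
  rw [Real.norm_eq_abs, abs_le]
  constructor <;> cases abs_cases (ulo j) <;> cases abs_cases (uhi j) <;> linarith

theorem intervalIntegrable_dotProduct (hu : Admissible t₀ T ulo uhi u) (hT : t₀ ≤ T)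
    {g : ℝ → Fin m → ℝ} (hg : Continuous g) :
    IntervalIntegrable (fun t => g t ⬝ᵥ u t) volume t₀ T := by
  have hsum : (fun t => g t ⬝ᵥ u t) = ∑ j, fun t => g t j * u t j := by
    ext t
    simp only [dotProduct, Finset.sum_apply]
  rw [hsum]
  exact IntervalIntegrable.sum Finset.univ fun j _ =>
    (hu.intervalIntegrable_apply hT j).continuousOn_mul ((continuous_apply j).comp hg).continuousOn

theorem intervalIntegrable_mulVec (hu : Admissible t₀ T ulo uhi u) (hT : t₀ ≤ T) {k : ℕ}
    {G : ℝ → Matrix (Fin k) (Fin m) ℝ} (hG : Continuous G) :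
    IntervalIntegrable (fun t => G t *ᵥ u t) volume t₀ T :=
  intervalIntegrable_pi_iff.mpr fun i =>
    hu.intervalIntegrable_dotProduct hT ((continuous_apply i).comp hG)

theorem dotProduct_endpoint (hu : Admissible t₀ T ulo uhi u) (hT : t₀ ≤ T) {n : ℕ}
    (A : Matrix (Fin n) (Fin n) ℝ) (B : Matrix (Fin n) (Fin m) ℝ) (c : Fin n → ℝ) :
    c ⬝ᵥ endpoint A B t₀ T u = ∫ t in t₀..T, psi A B T c t ⬝ᵥ u t := by
  have hint := hu.intervalIntegrable_mulVec hT
    ((continuous_mexp_sub_smul A T).matrix_mul continuous_const (B := fun _ => B))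
  simp only [← mulVec_mulVec] at hint
  rw [endpoint, dotProduct_intervalIntegral c hint]
  simp only [dotProduct_mexp_mulVec]

end Admissible

/-- For every `c` and every admissible control `u`, `cᵀ x(T;u) ≤ cᵀ x(T;u*(·;c))`;
consequently the endpoint of the bang-bang control maximizes `q ↦ cᵀ q` over `R(T)`. -/
theorem bang_bang_maximizes_linear_functional {n m : ℕ}
    (A : Matrix (Fin n) (Fin n) ℝ) (B : Matrix (Fin n) (Fin m) ℝ)
    (t₀ T : ℝ) (ht : t₀ < T) (ulo uhi : Fin m → ℝ) (hbnd : ulo ≤ uhi)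
    (c : Fin n → ℝ) :
    (∀ u, Admissible t₀ T ulo uhi u →
        c ⬝ᵥ endpoint A B t₀ T u ≤ c ⬝ᵥ endpoint A B t₀ T (bang A B T ulo uhi c)) ∧
      c ⬝ᵥ endpoint A B t₀ T (bang A B T ulo uhi c)
        = sSup ((fun q => c ⬝ᵥ q) '' ReachSet A B t₀ T ulo uhi) := by
  have hbang : Admissible t₀ T ulo uhi (bang A B T ulo uhi c) := admissible_bang A B T c hbnd
  have hψ := continuous_psi A B T c
  have hmax : ∀ u, Admissible t₀ T ulo uhi u →
      c ⬝ᵥ endpoint A B t₀ T u ≤ c ⬝ᵥ endpoint A B t₀ T (bang A B T ulo uhi c) := by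
    intro u hu
    rw [hu.dotProduct_endpoint ht.le, hbang.dotProduct_endpoint ht.le]
    refine intervalIntegral.integral_mono_on ht.le (hu.intervalIntegrable_dotProduct ht.le hψ)
      (hbang.intervalIntegrable_dotProduct ht.le hψ) fun t htI => ?_
    exact dotProduct_le_dotProduct_ite (fun i => (hu.2 t htI i).1) (fun i => (hu.2 t htI i).2)
  refine ⟨hmax, (IsGreatest.csSup_eq ⟨?_, ?_⟩).symm⟩
  · exact ⟨_, ⟨_, hbang, rfl⟩, rfl⟩
  · rintro _ ⟨_, ⟨u, hu, rfl⟩, rfl⟩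
    exact hmax u hu
end

section
/- In the single-input case with b ≠ 0 and u̲ < ū, let p be an exposed point of the reachable set R(T) with exposing vector c, i.e., cᵀ p > cᵀ q for all q ∈ R(T) \ {p}. Then there is no nondegenerate interval [t₁, t₂] ⊆ [t₀, T] (t₁ < t₂) on which ψ(·; c) vanishes identically. -/
open MeasureTheory Matrix

/-- State reached from the origin (single input): `x(T;u) = ∫_{t₀}^{T} e^{A(T−t)} b u(t) dt`. -/
noncomputable def endpoint1 {n : ℕ} (A : Matrix (Fin n) (Fin n) ℝ)
    (b : Fin n → ℝ) (t₀ T : ℝ) (u : ℝ → ℝ) : Fin n → ℝ :=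
  ∫ t in t₀..T, u t • (mexp ((T - t) • A)).mulVec b

/-- Admissible scalar control: measurable with `u̲ ≤ u(t) ≤ ū` on `[t₀,T]`. -/
def Admissible1 (t₀ T : ℝ) (ulo uhi : ℝ) (u : ℝ → ℝ) : Prop :=
  Measurable u ∧ ∀ t ∈ Set.Icc t₀ T, ulo ≤ u t ∧ u t ≤ uhi

/-- Reachable set at time `T` from the origin (single input). -/
def ReachSet1 {n : ℕ} (A : Matrix (Fin n) (Fin n) ℝ) (b : Fin n → ℝ)
    (t₀ T : ℝ) (ulo uhi : ℝ) : Set (Fin n → ℝ) :=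
  {x | ∃ u, Admissible1 t₀ T ulo uhi u ∧ x = endpoint1 A b t₀ T u}

/-- `ψ(t;c) = cᵀ e^{A(T−t)} b`. -/
noncomputable def psi1 {n : ℕ} (A : Matrix (Fin n) (Fin n) ℝ) (b : Fin n → ℝ)
    (T : ℝ) (c : Fin n → ℝ) (t : ℝ) : ℝ :=
  c ⬝ᵥ (mexp ((T - t) • A)).mulVec b

/-! If `ψ(·; c)` vanished on `[t₁, t₂]`, then modifying the control there would not change
`cᵀ x(T)`, so by exposedness it would not change `x(T)` either. But replacing the control by
`ū`, respectively `u̲`, on a piece `(t₁, s]` moves `x(T)` by `(ū - u̲) ∫_{t₁}^{s} e^{A(T-t)} b dt`,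
and this is nonzero for some `s`: its derivative in `s` is `e^{A(T-s)} b ≠ 0`. -/

open Set

lemma mexp_mulVec_ne_zero {n : ℕ} (M : Matrix (Fin n) (Fin n) ℝ) {b : Fin n → ℝ} (hb : b ≠ 0) :
    mexp M *ᵥ b ≠ 0 := by
  have hinv : mexp (-M) * mexp M = 1 := by
    rw [mexp, mexp, ← Matrix.exp_add_of_commute _ _ (Commute.refl M).neg_left, neg_add_cancel,
      NormedSpace.exp_zero]
  intro h
  exact hb (by simpa [mulVec_mulVec, hinv] using congrArg (mexp (-M) *ᵥ ·) h)

section Continuity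

attribute [local instance] Matrix.linftyOpNormedAddCommGroup Matrix.linftyOpNormedRing
  Matrix.linftyOpNormedAlgebra

lemma continuous_mexp_mulVec {n : ℕ} (A : Matrix (Fin n) (Fin n) ℝ) (b : Fin n → ℝ) (T : ℝ) :
    Continuous fun t : ℝ => mexp ((T - t) • A) *ᵥ b :=
  (NormedSpace.exp_continuous.comp ((continuous_const.sub continuous_id).smul continuous_const)
    ).matrix_mulVec continuous_const

end Continuity

lemma exists_intervalIntegral_ne_zero {E : Type*} [NormedAddCommGroup E] [NormedSpace ℝ E]
    [CompleteSpace E] {f : ℝ → E} (hf : Continuous f) {a b t : ℝ} (ht : t ∈ Ioo a b)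
    (hft : f t ≠ 0) : ∃ s ∈ Ioc a b, ∫ x in a..s, f x ≠ 0 := by
  by_contra! hzero
  have hF : (fun s => ∫ x in a..s, f x) =ᶠ[nhds t] fun _ => 0 :=
    Filter.eventually_of_mem (Ioo_mem_nhds ht.1 ht.2) fun s hs => hzero s (Ioo_subset_Ioc_self hs)
  exact hft (by simpa [hf.deriv_integral] using hF.deriv_eq)

lemma intervalIntegral_indicator_Ioc {E : Type*} [NormedAddCommGroup E] [NormedSpace ℝ E]
    {f : ℝ → E} {a₁ a₂ a₃ a₄ : ℝ} (h₁₂ : a₁ ≤ a₂) (h₂₃ : a₂ ≤ a₃) (h₃₄ : a₃ ≤ a₄) :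
    ∫ x in a₁..a₄, (Ioc a₂ a₃).indicator f x = ∫ x in a₂..a₃, f x := by
  rw [intervalIntegral.integral_of_le (h₁₂.trans (h₂₃.trans h₃₄)),
    intervalIntegral.integral_of_le h₂₃, integral_indicator measurableSet_Ioc,
    Measure.restrict_restrict measurableSet_Ioc,
    inter_eq_left.2 (Ioc_subset_Ioc h₁₂ h₃₄)]

lemma Admissible1.intervalIntegrable {t₀ T ulo uhi : ℝ} {u : ℝ → ℝ}
    (hu : Admissible1 t₀ T ulo uhi u) (hT : t₀ ≤ T) : IntervalIntegrable u volume t₀ T := by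
  rw [intervalIntegrable_iff_integrableOn_Ioc_of_le hT]
  refine Measure.integrableOn_of_bounded measure_Ioc_lt_top.ne hu.1.aestronglyMeasurable
    (M := max |ulo| |uhi|) (ae_restrict_of_forall_mem measurableSet_Ioc fun t ht => ?_)
  obtain ⟨hlo, hhi⟩ := hu.2 t (Ioc_subset_Icc_self ht)
  exact abs_le_max_abs_abs hlo hhi

lemma Admissible1.piecewise_const {t₀ T ulo uhi : ℝ} {u : ℝ → ℝ}
    (hu : Admissible1 t₀ T ulo uhi u) {s : Set ℝ} [DecidablePred (· ∈ s)] (hs : MeasurableSet s)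
    {r : ℝ} (hr : r ∈ Icc ulo uhi) : Admissible1 t₀ T ulo uhi (s.piecewise (fun _ => r) u) := by
  refine ⟨measurable_const.piecewise hs hu.1, fun t ht => ?_⟩
  by_cases hts : t ∈ s
  · simpa [hts] using hr
  · simpa [hts] using hu.2 t ht

section Endpoint

variable {n : ℕ} (A : Matrix (Fin n) (Fin n) ℝ) (b : Fin n → ℝ) {t₀ T ulo uhi : ℝ} {u : ℝ → ℝ}

lemma Admissible1.intervalIntegrable_smul_mexp_mulVec (hu : Admissible1 t₀ T ulo uhi u)
    (hT : t₀ ≤ T) :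
    IntervalIntegrable (fun t => u t • mexp ((T - t) • A) *ᵥ b) volume t₀ T :=
  (hu.intervalIntegrable hT).smul_continuousOn (continuous_mexp_mulVec A b T).continuousOn

lemma dotProduct_endpoint1 (c : Fin n → ℝ)
    (hu : IntervalIntegrable (fun t => u t • mexp ((T - t) • A) *ᵥ b) volume t₀ T) :
    c ⬝ᵥ endpoint1 A b t₀ T u = ∫ t in t₀..T, u t * psi1 A b T c t := by
  let L : (Fin n → ℝ) →L[ℝ] ℝ := LinearMap.toContinuousLinearMap (dotProductEquiv ℝ (Fin n) c)
  exact (L.intervalIntegral_comp_comm hu).symm.trans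
    (intervalIntegral.integral_congr fun t _ => by simp [L, psi1])

lemma endpoint1_sub {w : ℝ → ℝ}
    (hu : IntervalIntegrable (fun t => u t • mexp ((T - t) • A) *ᵥ b) volume t₀ T)
    (hw : IntervalIntegrable (fun t => w t • mexp ((T - t) • A) *ᵥ b) volume t₀ T) :
    endpoint1 A b t₀ T u - endpoint1 A b t₀ T w =
      ∫ t in t₀..T, (u t - w t) • mexp ((T - t) • A) *ᵥ b := by
  rw [endpoint1, endpoint1, ← intervalIntegral.integral_sub hu hw]
  congr 1 with t
  exact (sub_smul (u t) (w t) _).symm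

lemma dotProduct_endpoint1_piecewise_of_psi1_eq_zero {c : Fin n → ℝ} {t₁ t₂ r : ℝ}
    (hψ : ∀ t ∈ Ioc t₁ t₂, psi1 A b T c t = 0) (hu : Admissible1 t₀ T ulo uhi u) (hT : t₀ ≤ T)
    (hr : r ∈ Icc ulo uhi) :
    c ⬝ᵥ endpoint1 A b t₀ T ((Ioc t₁ t₂).piecewise (fun _ => r) u) =
      c ⬝ᵥ endpoint1 A b t₀ T u := by
  rw [dotProduct_endpoint1 A b c
      ((hu.piecewise_const measurableSet_Ioc hr).intervalIntegrable_smul_mexp_mulVec A b hT),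
    dotProduct_endpoint1 A b c (hu.intervalIntegrable_smul_mexp_mulVec A b hT)]
  refine intervalIntegral.integral_congr fun t _ => ?_
  by_cases ht : t ∈ Ioc t₁ t₂
  · simp [hψ t ht]
  · simp [ht]

lemma endpoint1_piecewise_sub_piecewise {t₁ t₂ r r' : ℝ} (hu : Admissible1 t₀ T ulo uhi u)
    (h₀₁ : t₀ ≤ t₁) (h₁₂ : t₁ ≤ t₂) (h₂T : t₂ ≤ T) (hr : r ∈ Icc ulo uhi)
    (hr' : r' ∈ Icc ulo uhi) :
    endpoint1 A b t₀ T ((Ioc t₁ t₂).piecewise (fun _ => r) u) -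
        endpoint1 A b t₀ T ((Ioc t₁ t₂).piecewise (fun _ => r') u) =
      (r - r') • ∫ t in t₁..t₂, mexp ((T - t) • A) *ᵥ b := by
  have hT : t₀ ≤ T := h₀₁.trans (h₁₂.trans h₂T)
  rw [endpoint1_sub A b
      ((hu.piecewise_const measurableSet_Ioc hr).intervalIntegrable_smul_mexp_mulVec A b hT)
      ((hu.piecewise_const measurableSet_Ioc hr').intervalIntegrable_smul_mexp_mulVec A b hT),
    ← intervalIntegral.integral_smul, ← intervalIntegral_indicator_Ioc h₀₁ h₁₂ h₂T]
  congr 1 with t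
  by_cases ht : t ∈ Ioc t₁ t₂ <;> simp [ht]

end Endpoint

theorem psi_not_vanishing_on_interval_of_exposed_general {n : ℕ}
    (A : Matrix (Fin n) (Fin n) ℝ) (b : Fin n → ℝ) (hb : b ≠ 0)
    (t₀ T : ℝ) (ulo uhi : ℝ) (hbnd : ulo < uhi)
    (p : Fin n → ℝ) (hp : p ∈ ReachSet1 A b t₀ T ulo uhi)
    (c : Fin n → ℝ)
    (hexposing : ∀ q ∈ ReachSet1 A b t₀ T ulo uhi, q ≠ p → c ⬝ᵥ q < c ⬝ᵥ p) :
    ¬ ∃ t₁ t₂ : ℝ, t₀ ≤ t₁ ∧ t₁ < t₂ ∧ t₂ ≤ T ∧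
        ∀ t ∈ Set.Icc t₁ t₂, psi1 A b T c t = 0 := by
  rintro ⟨t₁, t₂, ht₀₁, h₁₂, h₂T, hψ⟩
  obtain ⟨u, hu, rfl⟩ := hp
  obtain ⟨m, hm⟩ := nonempty_Ioo.2 h₁₂
  obtain ⟨s, ⟨h₁s, hs₂⟩, hvs⟩ :=
    exists_intervalIntegral_ne_zero (continuous_mexp_mulVec A b T) hm (mexp_mulVec_ne_zero _ hb)
  have hw_eq : ∀ r ∈ Icc ulo uhi,
      endpoint1 A b t₀ T ((Ioc t₁ s).piecewise (fun _ => r) u) = endpoint1 A b t₀ T u := by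
    intro r hr
    by_contra hne
    exact (hexposing _ ⟨_, hu.piecewise_const measurableSet_Ioc hr, rfl⟩ hne).ne
      (dotProduct_endpoint1_piecewise_of_psi1_eq_zero A b
        (fun t ht => hψ t ⟨ht.1.le, ht.2.trans hs₂⟩) hu (by linarith) hr)
  have hdiff := endpoint1_piecewise_sub_piecewise A b hu ht₀₁ h₁s.le (hs₂.trans h₂T)
    (r := uhi) (r' := ulo) ⟨hbnd.le, le_rfl⟩ ⟨le_rfl, hbnd.le⟩
  rw [hw_eq _ ⟨hbnd.le, le_rfl⟩, hw_eq _ ⟨le_rfl, hbnd.le⟩, sub_self] at hdiff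
  exact hvs ((smul_eq_zero.1 hdiff.symm).resolve_left (sub_ne_zero.2 hbnd.ne'))

/-- With `b ≠ 0` and `u̲ < ū`, if `p` is an exposed point of `R(T)` with exposing vector `c`,
then `ψ(·;c)` does not vanish identically on any nondegenerate subinterval of `[t₀,T]`. -/
theorem psi_not_vanishing_on_interval_of_exposed {n : ℕ}
    (A : Matrix (Fin n) (Fin n) ℝ) (b : Fin n → ℝ) (hb : b ≠ 0)
    (t₀ T : ℝ) (ht : t₀ < T) (ulo uhi : ℝ) (hbnd : ulo < uhi)
    (p : Fin n → ℝ) (hp : p ∈ ReachSet1 A b t₀ T ulo uhi)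
    (c : Fin n → ℝ)
    (hexposing : ∀ q ∈ ReachSet1 A b t₀ T ulo uhi, q ≠ p → c ⬝ᵥ q < c ⬝ᵥ p) :
    ¬ ∃ t₁ t₂ : ℝ, t₀ ≤ t₁ ∧ t₁ < t₂ ∧ t₂ ≤ T ∧
        ∀ t ∈ Set.Icc t₁ t₂, psi1 A b T c t = 0 :=
  psi_not_vanishing_on_interval_of_exposed_general A b hb t₀ T ulo uhi hbnd p hp c hexposing
end
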